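/- Refinement of heap deallocation from infinite to finite memory: if σ1^inf ≳ σ1^fin, p^inf = ↑p^fin, and free p^inf σ1^inf ∋ ok(σ2^inf, tt), then there exists σ2^fin such that σ2^inf ≳ σ2^fin and free p^fin σ1^fin ∋ ok(σ2^fin, tt). -/

import Mathlib

/-! Two-phase memory model: refinement of byte reads from infinite to finite memory. -/

/-- Pointers: an address tagged with a provenance (`Option ℕ`, `none` is the wildcard). -/
structure MPtr (Addr : Type) where
  a : Addr
  pr : Option ℕ

/-- Memory configurations. -/
structure Conf (Addr SByte : Type) where
  mem : Addr → Option (SByte × Option ℕ)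
  heap : Addr → Option (Set (MPtr Addr))
  stack : List (Set (MPtr Addr))
  used : Set (Option ℕ)

/-- Possible outcomes of a memory operation. -/
inductive ErrUbOom (A : Type) where
  | UB
  | OOM
  | FAIL
  | ok (a : A)

/-- The specification monad. -/
abbrev MemPropT (Addr SByte X : Type) : Type :=
  Conf Addr SByte → Set (ErrUbOom (Conf Addr SByte × X))

/-- `σ.mem[p] ≐ b`: address `p.a` maps to byte `b` with provenance `p.pr`. -/
def readByteAt {Addr SByte : Type} (σ : Conf Addr SByte) (p : MPtr Addr) (b : SByte) : Prop :=
  σ.mem p.a = some (b, p.pr)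

/-- A pointer is accessible in memory. -/
def accessible {Addr SByte : Type} (σ : Conf Addr SByte) (p : MPtr Addr) : Prop :=
  ∃ b, readByteAt σ p b


/-- `σ1 ≡ σ2 \\ ps`: the two memories agree on content and provenance at
all addresses except those of the pointers in `ps`. -/
def memEqExcept {Addr SByte : Type} (σ1 σ2 : Conf Addr SByte) (ps : Set (MPtr Addr)) : Prop :=
  ∀ (p' : MPtr Addr) (b : SByte),
    (∀ p ∈ ps, p'.a ≠ p.a) → (readByteAt σ1 p' b ↔ readByteAt σ2 p' b)

/-- Specification of heap deallocation `free p`: `p.a` must be a heap root associated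
with a block `ps` of pointers accessible in memory; the resulting configuration removes
`p.a` from the heap and unmaps all addresses of `ps` from memory, leaving everything
else unchanged. `UB` when `p.a` is not a root or the block was not allocated
(`OOM` is always allowed). -/
def freeSpec {Addr SByte : Type} (p : MPtr Addr) : MemPropT Addr SByte Unit :=
  fun σ1 =>
    { beh | beh = .OOM
          ∨ ((σ1.heap p.a = none ∨
              ∃ ps, σ1.heap p.a = some ps ∧ ∃ q ∈ ps, ¬ accessible σ1 q) ∧ beh = .UB)
          ∨ ∃ (σ2 : Conf Addr SByte) (ps : Set (MPtr Addr)),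
              σ2.stack = σ1.stack ∧ σ2.used = σ1.used ∧
              σ1.heap p.a = some ps ∧
              σ2.heap p.a = none ∧
              (∀ a' : Addr, a' ≠ p.a → σ2.heap a' = σ1.heap a') ∧
              (∀ q ∈ ps, accessible σ1 q ∧ σ2.mem q.a = none) ∧
              memEqExcept σ1 σ2 ps ∧
              beh = .ok (σ2, ()) }
/-- Canonical injection of finite (64-bit) addresses into the infinite address type ℤ. -/
def liftAddr (a : UInt64) : ℤ := (a.toNat : ℤ)

/-- Lifting of pointers. -/
def liftPtr (p : MPtr UInt64) : MPtr ℤ := ⟨liftAddr p.a, p.pr⟩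

/-- Pointwise lifting of a finite memory configuration to an infinite one,
given a lifting `liftB` of symbolic bytes. -/
def liftConf {SBf SBi : Type} (liftB : SBf → SBi) (σ : Conf UInt64 SBf) : Conf ℤ SBi where
  mem := fun z =>
    if 0 ≤ z ∧ z < 2 ^ 64 then
      (σ.mem (UInt64.ofNat z.toNat)).map (fun bp => (liftB bp.1, bp.2))
    else none
  heap := fun z =>
    if 0 ≤ z ∧ z < 2 ^ 64 then
      (σ.heap (UInt64.ofNat z.toNat)).map (fun S => liftPtr '' S)
    else none
  stack := σ.stack.map (fun f => liftPtr '' f)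
  used := σ.used


namespace FreeRefAux

lemma liftAddr_lt (a : UInt64) : liftAddr a < 2 ^ 64 := by
  have := UInt64.toNat_lt_size a
  simp only [UInt64.size] at this
  simp only [liftAddr]
  omega

lemma liftAddr_range (a : UInt64) : 0 ≤ liftAddr a ∧ liftAddr a < 2 ^ 64 :=
  ⟨Int.natCast_nonneg _, liftAddr_lt a⟩

lemma toNat_ofNat' (n : ℕ) (h : n < 2 ^ 64) : (UInt64.ofNat n).toNat = n := by
  show n % UInt64.size = n
  simp only [UInt64.size]; omega

lemma liftAddr_ofNat_toNat (z : ℤ) (h : 0 ≤ z ∧ z < 2 ^ 64) :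
    liftAddr (UInt64.ofNat z.toNat) = z := by
  have hz : z.toNat < 2 ^ 64 := by omega
  simp only [liftAddr, toNat_ofNat' _ hz]
  omega

lemma ofNat_liftAddr (a : UInt64) : UInt64.ofNat (liftAddr a).toNat = a := by
  apply UInt64.toNat.inj
  have h1 : (liftAddr a).toNat = a.toNat := by simp [liftAddr]
  rw [h1, toNat_ofNat' _ (by simpa [UInt64.size] using UInt64.toNat_lt_size a)]

lemma liftAddr_inj : Function.Injective liftAddr := by
  intro a b h
  apply UInt64.toNat.inj
  simp only [liftAddr] at h; exact_mod_cast h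

lemma liftConf_mem {SBf SBi : Type} (liftB : SBf → SBi) (σ : Conf UInt64 SBf) (a : UInt64) :
    (liftConf liftB σ).mem (liftAddr a) = (σ.mem a).map (fun bp => (liftB bp.1, bp.2)) := by
  simp only [liftConf, if_pos (liftAddr_range a), ofNat_liftAddr]

lemma liftConf_heap {SBf SBi : Type} (liftB : SBf → SBi) (σ : Conf UInt64 SBf) (a : UInt64) :
    (liftConf liftB σ).heap (liftAddr a) = (σ.heap a).map (fun S => liftPtr '' S) := by
  simp only [liftConf, if_pos (liftAddr_range a), ofNat_liftAddr]

end FreeRefAux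

namespace FreeRefAux

lemma Conf.ext' {A S : Type} {σ τ : Conf A S} (hm : σ.mem = τ.mem) (hh : σ.heap = τ.heap)
    (hs : σ.stack = τ.stack) (hu : σ.used = τ.used) : σ = τ := by
  cases σ; cases τ; simp_all

lemma memEq_at {A S : Type} (σ1 σ2 : Conf A S) (ps : Set (MPtr A)) (heq : memEqExcept σ1 σ2 ps)
    (z : A) (hz : ∀ q ∈ ps, z ≠ q.a) : σ2.mem z = σ1.mem z := by
  cases h2 : σ2.mem z with
  | none =>
    cases h1 : σ1.mem z with
    | none => rfl
    | some bp =>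
      have := (heq ⟨z, bp.2⟩ bp.1 hz).mp (by simpa [readByteAt] using h1)
      simp [readByteAt, h2] at this
  | some bp =>
    have := (heq ⟨z, bp.2⟩ bp.1 hz).mpr (by simpa [readByteAt] using h2)
    simp only [readByteAt] at this
    rw [this]

end FreeRefAux


open FreeRefAux in
/-- Refinement of heap deallocation from infinite to finite memory: if `σ1^inf ≳ σ1^fin`,
`p^inf = ↑p^fin`, and `free p^inf σ1^inf ∋ ok (σ2^inf, tt)`, then there exists `σ2^fin`
such that `σ2^inf ≳ σ2^fin` and `free p^fin σ1^fin ∋ ok (σ2^fin, tt)`. -/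
theorem free_spec_refinement {SBf SBi : Type}
    (liftB : SBf → SBi) (hinj : Function.Injective liftB)
    (σ1inf σ2inf : Conf ℤ SBi) (σ1fin : Conf UInt64 SBf)
    (pinf : MPtr ℤ) (pfin : MPtr UInt64)
    (hσ : σ1inf = liftConf liftB σ1fin)
    (hp : pinf = liftPtr pfin)
    (hfree : ErrUbOom.ok (σ2inf, ()) ∈ freeSpec pinf σ1inf) :
    ∃ σ2fin : Conf UInt64 SBf,
      σ2inf = liftConf liftB σ2fin ∧
      ErrUbOom.ok (σ2fin, ()) ∈ freeSpec pfin σ1fin := by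
    classical
  subst hσ hp
  simp only [freeSpec, Set.mem_setOf_eq] at hfree
  rcases hfree with h | ⟨-, h⟩ | ⟨σ2, ps, hstk, hused, hheap1, hheap2, hheapo, hps, heq, hok⟩
  · cases h
  · cases h
  simp only [ErrUbOom.ok.injEq, Prod.mk.injEq] at hok
  obtain ⟨rfl, -⟩ := hok
  have hpa : (liftPtr pfin).a = liftAddr pfin.a := rfl
  rw [hpa, liftConf_heap] at hheap1
  obtain ⟨psf, hpsf, hpslift⟩ := Option.map_eq_some_iff.mp hheap1
  subst hpslift
  refine ⟨⟨fun a => if σ2inf.mem (liftAddr a) = none then none else σ1fin.mem a,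
           fun a => if a = pfin.a then none else σ1fin.heap a,
           σ1fin.stack, σ1fin.used⟩, ?_, ?_⟩
  · -- σ2inf = liftConf liftB σ2fin
    apply Conf.ext'
    · funext z
      by_cases hr : 0 ≤ z ∧ z < 2 ^ 64
      · have hza : liftAddr (UInt64.ofNat z.toNat) = z := liftAddr_ofNat_toNat z hr
        rw [← hza, liftConf_mem]
        dsimp only
        by_cases hn : σ2inf.mem (liftAddr (UInt64.ofNat z.toNat)) = none
        · rw [if_pos hn, Option.map_none, hn]
        · have hz : ∀ q ∈ liftPtr '' psf, liftAddr (UInt64.ofNat z.toNat) ≠ q.a :=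
            fun q hq h => hn (h ▸ (hps q hq).2)
          rw [if_neg hn, memEq_at _ _ _ heq _ hz, liftConf_mem]
      · have hz : ∀ q ∈ liftPtr '' psf, z ≠ q.a := by
          rintro q ⟨qf, -, rfl⟩ hzq
          exact hr (hzq ▸ liftAddr_range qf.a)
        rw [memEq_at _ _ _ heq z hz]
        simp only [liftConf, if_neg hr]
    · funext z
      by_cases hr : 0 ≤ z ∧ z < 2 ^ 64
      · have hza : liftAddr (UInt64.ofNat z.toNat) = z := liftAddr_ofNat_toNat z hr
        rw [← hza, liftConf_heap]
        dsimp only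
        by_cases hap : UInt64.ofNat z.toNat = pfin.a
        · rw [if_pos hap, Option.map_none, hap, ← hpa]
          exact hheap2
        · rw [if_neg hap, ← liftConf_heap (liftB := liftB)]
          refine hheapo _ ?_
          rw [hpa]
          exact fun h => hap (liftAddr_inj h)
      · have hzp : z ≠ (liftPtr pfin).a := by
          rw [hpa]
          exact fun h => hr (h ▸ liftAddr_range pfin.a)
        rw [hheapo z hzp]
        simp only [liftConf, if_neg hr]
    · rw [hstk]; rfl
    · rw [hused]; rfl
  · -- finite free spec
    simp only [freeSpec, Set.mem_setOf_eq]
    refine Or.inr (Or.inr ⟨⟨fun a => if σ2inf.mem (liftAddr a) = none then none else σ1fin.mem a,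
      fun a => if a = pfin.a then none else σ1fin.heap a, σ1fin.stack, σ1fin.used⟩,
      psf, rfl, rfl, hpsf, if_pos rfl, fun a' ha' => if_neg ha', ?_, ?_, rfl⟩)
    · intro q hq
      obtain ⟨⟨b, hb⟩, hnone⟩ := hps (liftPtr q) ⟨q, hq, rfl⟩
      have hb' : (σ1fin.mem q.a).map (fun bp => (liftB bp.1, bp.2)) = some (b, q.pr) := by
        rw [← liftConf_mem]; exact hb
      obtain ⟨bp, hbp, hbp2⟩ := Option.map_eq_some_iff.mp hb'
      have hpr : bp.2 = q.pr := congrArg Prod.snd hbp2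
      refine ⟨⟨bp.1, ?_⟩, ?_⟩
      · show σ1fin.mem q.a = some (bp.1, q.pr)
        rw [hbp, ← hpr]
      · show (if σ2inf.mem (liftAddr q.a) = none then none else σ1fin.mem q.a) = none
        exact if_pos hnone
    · intro p' b hp'
      have hz : ∀ q ∈ liftPtr '' psf, liftAddr p'.a ≠ q.a := by
        rintro q ⟨qf, hqf, rfl⟩ h
        exact hp' qf hqf (liftAddr_inj h)
      have h1 : σ2inf.mem (liftAddr p'.a) =
          (σ1fin.mem p'.a).map (fun bp => (liftB bp.1, bp.2)) := by
        rw [← liftConf_mem]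
        exact memEq_at _ _ _ heq _ hz
      show σ1fin.mem p'.a = some (b, p'.pr) ↔
        (if σ2inf.mem (liftAddr p'.a) = none then none else σ1fin.mem p'.a) = some (b, p'.pr)
      cases hm : σ1fin.mem p'.a with
      | none =>
        rw [hm, Option.map_none] at h1
        rw [if_pos h1]
      | some bp =>
        rw [hm, Option.map_some] at h1
        rw [if_neg (show ¬σ2inf.mem (liftAddr p'.a) = none by
          rw [h1]; exact Option.some_ne_none _)]
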